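/- arXiv:0902.1909 — 3 statements merged into one kernel-verified Lean document; each statement's English description precedes it below -/
import Mathlib

section
/- Let γ₁,…,γ_m be linearly independent vectors in a real inner product space V with ⟨γ_i,γ_j⟩ ≤ 0 for i ≠ j. Define R₁ = {H ∈ V : H ∈ cone(γ₁,…,γ_m) with nonnegative coefficients, ‖H‖ ≥ 1, and ⟨γ₁,H⟩ ≥ ⟨γ_j,H⟩ for all j}. Let P be the orthogonal projection onto the orthogonal complement of span{γ₂,…,γ_m}. Then there exists a > 0 such that ‖P(H)‖ ≥ a‖H‖ for all H ∈ R₁. -/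
/-!
Write `H = ∑ cᵢ γᵢ` with `cᵢ ≥ 0`. The projection `P` kills `γ₂, …, γ_m`, so `P H = c₁ P γ₁` with
`P γ₁ ≠ 0` by linear independence, and it suffices to bound `‖H‖` by a multiple of `c₁`.
Since `⟨γ₁, H⟩` is the largest of the `⟨γⱼ, H⟩`, we get `‖H‖² = ∑ cⱼ ⟨γⱼ, H⟩ ≤ (∑ cⱼ) ⟨γ₁, H⟩`;
the obtuse angles give `⟨γ₁, H⟩ ≤ c₁ ‖γ₁‖²`, and linear independence (equivalence of norms on
the coefficient space) gives `∑ cⱼ ≤ C ‖H‖`. Together, `‖H‖ ≤ C ‖γ₁‖² c₁`.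
-/

open scoped RealInnerProductSpace

section Cone

variable {E : Type*} [NormedAddCommGroup E] [InnerProductSpace ℝ E]
  {ι : Type*} [Fintype ι] {γ : ι → E} {c : ι → ℝ}

theorem LinearIndependent.exists_sum_abs_le_mul_norm (hind : LinearIndependent ℝ γ) :
    ∃ C > 0, ∀ c : ι → ℝ, ∑ i, |c i| ≤ C * ‖∑ i, c i • γ i‖ := by
  obtain ⟨K, hK, hanti⟩ := (Fintype.linearCombination ℝ γ).injective_iff_antilipschitz.mp
    (linearIndependent_iff_injective_fintypeLinearCombination.mp hind)
  refine ⟨(Fintype.card ι + 1) * K, by positivity, fun c => ?_⟩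
  have hc : ‖c‖ ≤ K * ‖∑ i, c i • γ i‖ := by
    simpa only [Fintype.linearCombination_apply] using hanti.le_mul_norm (map_zero _) c
  calc ∑ i, |c i| ≤ ∑ _i : ι, ‖c‖ := Finset.sum_le_sum fun i _ => norm_le_pi_norm c i
    _ = Fintype.card ι * ‖c‖ := by simp
    _ ≤ (Fintype.card ι + 1) * ‖c‖ := by gcongr; linarith
    _ ≤ (Fintype.card ι + 1) * (K * ‖∑ i, c i • γ i‖) := by gcongr
    _ = (Fintype.card ι + 1) * K * ‖∑ i, c i • γ i‖ := by ring

theorem inner_sum_smul_le_of_inner_nonpos (hobtuse : ∀ i j, i ≠ j → ⟪γ i, γ j⟫ ≤ 0)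
    (hc : ∀ i, 0 ≤ c i) (k : ι) : ⟪γ k, ∑ i, c i • γ i⟫ ≤ c k * ‖γ k‖ ^ 2 := by
  classical
  have hrest : ∑ i ∈ Finset.univ.erase k, c i * ⟪γ k, γ i⟫ ≤ 0 :=
    Finset.sum_nonpos fun i hi =>
      mul_nonpos_of_nonneg_of_nonpos (hc i) (hobtuse k i (Finset.ne_of_mem_erase hi).symm)
  simp only [inner_sum, real_inner_smul_right]
  rw [← Finset.add_sum_erase _ _ (Finset.mem_univ k), real_inner_self_eq_norm_sq]
  linarith

theorem norm_sq_le_sum_mul_inner_of_inner_le (hc : ∀ i, 0 ≤ c i) {k : ι}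
    (hmax : ∀ j, ⟪γ j, ∑ i, c i • γ i⟫ ≤ ⟪γ k, ∑ i, c i • γ i⟫) :
    ‖∑ i, c i • γ i‖ ^ 2 ≤ (∑ i, c i) * ⟪γ k, ∑ i, c i • γ i⟫ := by
  rw [← real_inner_self_eq_norm_sq]
  nth_rewrite 1 [sum_inner]
  simp only [real_inner_smul_left, Finset.sum_mul]
  exact Finset.sum_le_sum fun i _ => mul_le_mul_of_nonneg_left (hmax i) (hc i)

theorem norm_sum_smul_le_of_inner_le (hobtuse : ∀ i j, i ≠ j → ⟪γ i, γ j⟫ ≤ 0)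
    (hc : ∀ i, 0 ≤ c i) {C : ℝ} (hC : 0 ≤ C) (hsum : ∑ i, c i ≤ C * ‖∑ i, c i • γ i‖) {k : ι}
    (hmax : ∀ j, ⟪γ j, ∑ i, c i • γ i⟫ ≤ ⟪γ k, ∑ i, c i • γ i⟫) :
    ‖∑ i, c i • γ i‖ ≤ C * (c k * ‖γ k‖ ^ 2) := by
  have hsq := norm_sq_le_sum_mul_inner_of_inner_le hc hmax
  have hinner := inner_sum_smul_le_of_inner_nonpos hobtuse hc k
  have hsum_nonneg : 0 ≤ ∑ i, c i := Finset.sum_nonneg fun i _ => hc i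
  set H := ∑ i, c i • γ i
  rcases (norm_nonneg H).eq_or_lt with hH | hH
  · rw [← hH]; have := hc k; positivity
  have hinner_nonneg : 0 ≤ ⟪γ k, H⟫ := by
    by_contra! hneg
    nlinarith [mul_nonpos_of_nonneg_of_nonpos hsum_nonneg hneg.le]
  refine le_of_mul_le_mul_left ?_ hH
  calc ‖H‖ * ‖H‖ ≤ (∑ i, c i) * ⟪γ k, H⟫ := by simpa only [sq] using hsq
    _ ≤ (C * ‖H‖) * (c k * ‖γ k‖ ^ 2) := mul_le_mul hsum hinner hinner_nonneg (by positivity)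
    _ = ‖H‖ * (C * (c k * ‖γ k‖ ^ 2)) := by ring

end Cone

section Projection

variable {E : Type*} [NormedAddCommGroup E] [InnerProductSpace ℝ E] {ι : Type*} {γ : ι → E}

theorem Submodule.orthogonalProjectionOnto_orthogonal_sum_smul [Fintype ι] (K : Submodule ℝ E)
    [Kᗮ.HasOrthogonalProjection] {k : ι} (hK : ∀ i ≠ k, γ i ∈ K) (c : ι → ℝ) :
    Kᗮ.orthogonalProjectionOnto (∑ i, c i • γ i) = c k • Kᗮ.orthogonalProjectionOnto (γ k) := by
  rw [map_sum, Finset.sum_eq_single k]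
  · exact map_smul _ _ _
  · intro i _ hi
    rw [map_smul, orthogonalProjectionOnto_orthogonal_apply_eq_zero (hK i hi), smul_zero]
  · simp

theorem LinearIndependent.orthogonalProjectionOnto_orthogonal_span_ne_zero
    (hind : LinearIndependent ℝ γ) (k : ι)
    [(Submodule.span ℝ (γ '' {i | i ≠ k})).HasOrthogonalProjection] :
    (Submodule.span ℝ (γ '' {i | i ≠ k}))ᗮ.orthogonalProjectionOnto (γ k) ≠ 0 := by
  rw [Ne, Submodule.orthogonalProjectionOnto_eq_zero_iff, Submodule.orthogonal_orthogonal]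
  exact hind.notMem_span_image (by simp)

end Projection

/-- On the region `R₁`, the orthogonal projection `P` onto `span{γ₂,…,γ_m}ᗮ`
satisfies `‖P H‖ ≥ a ‖H‖` for some `a > 0`. -/
theorem stmt5 {V : Type*} [NormedAddCommGroup V] [InnerProductSpace ℝ V]
    [FiniteDimensional ℝ V]
    {m : ℕ} [NeZero m] (γ : Fin m → V) (hind : LinearIndependent ℝ γ)
    (hobtuse : ∀ i j, i ≠ j → ⟪γ i, γ j⟫ ≤ 0)
    (R₁ : Set V)
    (hR₁ : R₁ = {H : V | (∃ c : Fin m → ℝ, (∀ i, 0 ≤ c i) ∧ H = ∑ i, c i • γ i) ∧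
      1 ≤ ‖H‖ ∧ ∀ j, ⟪γ j, H⟫ ≤ ⟪γ 0, H⟫}) :
    ∃ a > 0, ∀ H ∈ R₁,
      a * ‖H‖ ≤
        ‖(Submodule.orthogonalProjection ((Submodule.span ℝ (γ '' {i | i ≠ 0}))ᗮ) H : V)‖ := by
  subst hR₁
  set K := Submodule.span ℝ (γ '' {i | i ≠ 0})
  obtain ⟨C, hC, hsum⟩ := hind.exists_sum_abs_le_mul_norm
  have hP : 0 < ‖Kᗮ.orthogonalProjectionOnto (γ 0)‖ :=
    norm_pos_iff.mpr (hind.orthogonalProjectionOnto_orthogonal_span_ne_zero 0)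
  have hγ : 0 < ‖γ 0‖ := norm_pos_iff.mpr (hind.ne_zero 0)
  refine ⟨‖Kᗮ.orthogonalProjectionOnto (γ 0)‖ / (C * ‖γ 0‖ ^ 2), by positivity, ?_⟩
  rintro _ ⟨⟨c, hc, rfl⟩, -, hmax⟩
  have hH := norm_sum_smul_le_of_inner_le hobtuse hc hC.le
    (by simpa only [abs_of_nonneg (hc _)] using hsum c) hmax
  rw [K.orthogonalProjectionOnto_orthogonal_sum_smul
    (fun i hi => Submodule.subset_span ⟨i, hi, rfl⟩), Submodule.coe_smul, norm_smul, Real.norm_of_nonneg (hc 0)]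
  calc _ ≤ ‖Kᗮ.orthogonalProjectionOnto (γ 0)‖ / (C * ‖γ 0‖ ^ 2) * (C * (c 0 * ‖γ 0‖ ^ 2)) := by
        gcongr
    _ = c 0 * ‖Kᗮ.orthogonalProjectionOnto (γ 0)‖ := by field_simp
end

section
/- With the notation of the previous statement, if H ∈ closure(R₁) and P(H) = 0, then ⟨H, γ_j⟩ = 0 for all j = 1,…,m, contradicting ‖H‖ ≥ 1; hence P(H) ≠ 0 on cl(R₁). -/
open scoped RealInnerProductSpace

/-!
Points of `cl(R₁)` still lie in the cone `∑ cᵢ γᵢ`, `cᵢ ≥ 0`, since a simplicial cone is closed.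
If such a point `H` lies in `span {γⱼ | j ≠ 0}`, linear independence forces `c₀ = 0`, and then the
obtuse angles give `⟪γ₀, H⟫ ≤ 0`. Since `⟪γ₀, H⟫` is the largest of the `⟪γⱼ, H⟫`, all of them
are `≤ 0`, so `‖H‖² = ∑ cⱼ ⟪γⱼ, H⟫ ≤ 0`, which is impossible when `‖H‖ ≥ 1`.
-/

section NonnegSpan

variable {V : Type*} [NormedAddCommGroup V] [InnerProductSpace ℝ V]
  {ι : Type*} [Fintype ι] {γ : ι → V}

def nonnegSpan (γ : ι → V) : Set V :=
  {H | ∃ c : ι → ℝ, (∀ i, 0 ≤ c i) ∧ H = ∑ i, c i • γ i}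

theorem LinearIndependent.isClosed_nonnegSpan (hγ : LinearIndependent ℝ γ) :
    IsClosed (nonnegSpan γ) := by
  have hinj : LinearMap.ker (Fintype.linearCombination ℝ γ) = ⊥ :=
    LinearMap.ker_eq_bot.mpr (linearIndependent_iff_injective_fintypeLinearCombination.mp hγ)
  have hclosed : IsClosed {c : ι → ℝ | ∀ i, 0 ≤ c i} := by
    rw [Set.ofPred_forall]
    exact isClosed_iInter fun i => isClosed_le continuous_const (continuous_apply i)
  convert ((Fintype.linearCombination ℝ γ).isClosedEmbedding_of_injective hinj).isClosedMap _ hclosed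
  ext H
  simp only [nonnegSpan, Set.mem_ofPred_eq, Set.mem_image, Fintype.linearCombination_apply, eq_comm]

theorem LinearIndependent.coeff_eq_zero_of_sum_mem_span_ne (hγ : LinearIndependent ℝ γ)
    {c : ι → ℝ} {i₀ : ι}
    (hmem : ∑ i, c i • γ i ∈ Submodule.span ℝ (γ '' {i | i ≠ i₀})) : c i₀ = 0 := by
  classical
  set W := Submodule.span ℝ (γ '' {i | i ≠ i₀})
  have hrest : ∑ i ∈ Finset.univ.erase i₀, c i • γ i ∈ W :=
    W.sum_mem fun i hi => W.smul_mem _ (Submodule.subset_span ⟨i, Finset.ne_of_mem_erase hi, rfl⟩)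
  have hsplit := Finset.add_sum_erase Finset.univ (fun i => c i • γ i) (Finset.mem_univ i₀)
  have hc₀ : c i₀ • γ i₀ ∈ W := by
    simpa only [← hsplit, add_sub_cancel_right] using W.sub_mem hmem hrest
  by_contra hne
  exact hγ.notMem_span_image (s := {i | i ≠ i₀}) (fun h => h rfl)
    ((W.smul_mem_iff hne).mp hc₀)

theorem inner_sum_nonpos_of_coeff_eq_zero (hobtuse : ∀ i j, i ≠ j → ⟪γ i, γ j⟫ ≤ 0)
    {c : ι → ℝ} (hc : ∀ i, 0 ≤ c i) {i₀ : ι} (hc₀ : c i₀ = 0) :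
    ⟪γ i₀, ∑ i, c i • γ i⟫ ≤ 0 := by
  rw [inner_sum]
  refine Finset.sum_nonpos fun i _ => ?_
  rw [real_inner_smul_right]
  rcases eq_or_ne i i₀ with rfl | hi
  · simp [hc₀]
  · exact mul_nonpos_of_nonneg_of_nonpos (hc i) (hobtuse i₀ i hi.symm)

theorem sum_eq_zero_of_inner_nonpos {c : ι → ℝ} (hc : ∀ i, 0 ≤ c i)
    (hinner : ∀ j, ⟪γ j, ∑ i, c i • γ i⟫ ≤ 0) : ∑ i, c i • γ i = 0 := by
  have hsq : ‖∑ i, c i • γ i‖ ^ 2 ≤ 0 := by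
    rw [← real_inner_self_eq_norm_sq]
    nth_rw 1 [sum_inner]
    simp only [real_inner_smul_left]
    exact Finset.sum_nonpos fun j _ => mul_nonpos_of_nonneg_of_nonpos (hc j) (hinner j)
  exact norm_eq_zero.mp (by nlinarith [norm_nonneg (∑ i, c i • γ i)])

theorem eq_zero_of_mem_nonnegSpan_of_mem_span_ne
    (hγ : LinearIndependent ℝ γ) (hobtuse : ∀ i j, i ≠ j → ⟪γ i, γ j⟫ ≤ 0)
    {H : V} (hH : H ∈ nonnegSpan γ) {i₀ : ι} (hspan : H ∈ Submodule.span ℝ (γ '' {i | i ≠ i₀}))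
    (hmax : ∀ j, ⟪γ j, H⟫ ≤ ⟪γ i₀, H⟫) : H = 0 := by
  obtain ⟨c, hc, rfl⟩ := hH
  have hc₀ := hγ.coeff_eq_zero_of_sum_mem_span_ne hspan
  exact sum_eq_zero_of_inner_nonpos hc fun j =>
    (hmax j).trans (inner_sum_nonpos_of_coeff_eq_zero hobtuse hc hc₀)

end NonnegSpan

/-- If `H ∈ cl(R₁)` and `P H = 0` then `⟪H, γ j⟫ = 0` for all `j`; consequently
`P H ≠ 0` on `cl(R₁)`. -/
theorem stmt6 {V : Type*} [NormedAddCommGroup V] [InnerProductSpace ℝ V]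
    [FiniteDimensional ℝ V]
    {m : ℕ} [NeZero m] (γ : Fin m → V) (hind : LinearIndependent ℝ γ)
    (hobtuse : ∀ i j, i ≠ j → ⟪γ i, γ j⟫ ≤ 0)
    (R₁ : Set V)
    (hR₁ : R₁ = {H : V | (∃ c : Fin m → ℝ, (∀ i, 0 ≤ c i) ∧ H = ∑ i, c i • γ i) ∧
      1 ≤ ‖H‖ ∧ ∀ j, ⟪γ j, H⟫ ≤ ⟪γ 0, H⟫})
    (P : V → V)
    (hP : ∀ H : V,
      P H = (Submodule.orthogonalProjectionOnto ((Submodule.span ℝ (γ '' {i | i ≠ 0}))ᗮ) H : V)) :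
    (∀ H ∈ closure R₁, P H = 0 → ∀ j, ⟪H, γ j⟫ = 0) ∧
    ∀ H ∈ closure R₁, P H ≠ 0 := by
  set W := Submodule.span ℝ (γ '' {i | i ≠ 0})
  have hPzero : ∀ H, P H = 0 ↔ H ∈ W := fun H => by
    rw [hP, ZeroMemClass.coe_eq_zero, Submodule.orthogonalProjectionOnto_eq_zero_iff,
      Submodule.orthogonal_orthogonal]
  have hmaxClosed : IsClosed {H : V | ∀ j, ⟪γ j, H⟫ ≤ ⟪γ 0, H⟫} := by
    rw [Set.ofPred_forall]
    exact isClosed_iInter fun j => isClosed_le (by fun_prop) (by fun_prop)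
  have hclosed : IsClosed {H : V | H ∈ nonnegSpan γ ∧ 1 ≤ ‖H‖ ∧ ∀ j, ⟪γ j, H⟫ ≤ ⟪γ 0, H⟫} :=
    hind.isClosed_nonnegSpan.inter ((isClosed_le continuous_const continuous_norm).inter hmaxClosed)
  have hnotMem : ∀ H ∈ closure R₁, H ∉ W := by
    intro H hH hHW
    obtain ⟨hcone, hnorm, hmax⟩ := closure_minimal hR₁.le hclosed hH
    have := eq_zero_of_mem_nonnegSpan_of_mem_span_ne hind hobtuse hcone hHW hmax
    norm_num [this] at hnorm
  exact ⟨fun H hH hPH => absurd ((hPzero H).mp hPH) (hnotMem H hH),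
    fun H hH hPH => hnotMem H hH ((hPzero H).mp hPH)⟩
end

section
/- For every irreducible root system Φ of rank n and every proper simple subroot system Ψ of Φ with m simple roots (m < n), one has n/|Φ| < m/|Ψ|. -/
open scoped RealInnerProductSpace Classical

/-!
The operator `T x = ∑_{γ ∈ Φ} (⟪γ, x⟫ / ‖γ‖²) γ` is symmetric and commutes with the reflections
in the roots, so its eigenspaces are stable under them. A subspace stable under the reflection in
`γ` contains `γ` or is orthogonal to it, so by irreducibility some eigenspace is everything and
`T = μ • id`. Taking the trace gives `μ · dim V = |Φ|`, and taking the trace of `T` compressed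
to `W = span S` gives `μ · m = ∑_{γ ∈ Φ} ‖P_W γ‖² / ‖γ‖²`. Each root of `Ψ ⊆ W` contributes
`1`, and irreducibility yields a root outside `Ψ` that is not orthogonal to `W`, so
`|Ψ| < μ m`. Hence `n / |Φ| ≤ dim V / |Φ| = 1 / μ < m / |Ψ|`.
-/

open Module Submodule InnerProductSpace

section

variable {V : Type*} [NormedAddCommGroup V] [InnerProductSpace ℝ V]

def IsOrthIndecomposable (Φ : Finset V) : Prop :=
  ∀ S ⊆ Φ, (∀ α ∈ S, ∀ β ∈ Φ, β ∉ S → ⟪α, β⟫ = 0) → S = ∅ ∨ S = Φ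

noncomputable def normalizedFrameOp (Φ : Finset V) : V →ₗ[ℝ] V :=
  ∑ γ ∈ Φ, (‖γ‖ ^ 2)⁻¹ • (rankOne ℝ γ γ : V →ₗ[ℝ] V)

lemma normalizedFrameOp_apply (Φ : Finset V) (x : V) :
    normalizedFrameOp Φ x = ∑ γ ∈ Φ, (⟪γ, x⟫ / ‖γ‖ ^ 2) • γ := by
  simp [normalizedFrameOp, LinearMap.sum_apply, smul_smul, div_eq_inv_mul]

lemma isSymmetric_normalizedFrameOp (Φ : Finset V) : (normalizedFrameOp Φ).IsSymmetric := by
  intro x y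
  simp only [normalizedFrameOp_apply, sum_inner, inner_sum, real_inner_smul_left,
    real_inner_smul_right]
  refine Finset.sum_congr rfl fun γ _ => ?_
  rw [real_inner_comm x γ]
  ring

lemma normalizedFrameOp_apply_linearIsometryEquiv (Φ : Finset V) (g : V ≃ₗᵢ[ℝ] V)
    (hg : ∀ γ ∈ Φ, g γ ∈ Φ) (x : V) :
    normalizedFrameOp Φ (g x) = g (normalizedFrameOp Φ x) := by
  have hΦ : Φ.map g.toEquiv.toEmbedding = Φ :=
    Finset.map_eq_of_subset fun y hy => by
      rw [Finset.mem_map] at hy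
      obtain ⟨γ, hγ, rfl⟩ := hy
      exact hg γ hγ
  conv_lhs => rw [normalizedFrameOp_apply, ← hΦ, Finset.sum_map]
  simp [normalizedFrameOp_apply, map_sum, map_smul, g.inner_map_map, g.norm_map]

lemma reflection_orthogonal_singleton_apply (α x : V) :
    reflection (ℝ ∙ α)ᗮ x = x - (2 * ⟪x, α⟫ / ⟪α, α⟫) • α := by
  rw [reflection_orthogonal_apply, reflection_singleton_apply, real_inner_self_eq_norm_sq,
    real_inner_comm]
  simp only [RCLike.ofReal_real_eq_id, id_eq]
  module

lemma mem_or_mem_orthogonal_of_reflection_mapsTo {E : Submodule ℝ V} {α : V}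
    (hE : ∀ x ∈ E, reflection (ℝ ∙ α)ᗮ x ∈ E) : α ∈ E ∨ α ∈ Eᗮ := by
  rw [or_iff_not_imp_right, mem_orthogonal]
  intro h
  push Not at h
  obtain ⟨x, hxE, hxα⟩ := h
  have hα : ⟪α, α⟫ ≠ 0 := fun h => hxα (by rw [inner_self_eq_zero.mp h, inner_zero_right])
  have hsub : (2 * ⟪x, α⟫ / ⟪α, α⟫) • α ∈ E := by
    simpa [reflection_orthogonal_singleton_apply] using E.sub_mem hxE (hE x hxE)
  exact (E.smul_mem_iff (by positivity)).mp hsub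

lemma IsOrthIndecomposable.eq_bot_or_eq_top {Φ : Finset V} (hirr : IsOrthIndecomposable Φ)
    (hspan : span ℝ (Φ : Set V) = ⊤) {E : Submodule ℝ V}
    (hE : ∀ γ ∈ Φ, γ ∈ E ∨ γ ∈ Eᗮ) : E = ⊥ ∨ E = ⊤ := by
  have hsplit : ∀ α ∈ Φ.filter (· ∈ E), ∀ β ∈ Φ, β ∉ Φ.filter (· ∈ E) → ⟪α, β⟫ = 0 := by
    intro α hα β hβ hβE
    simp only [Finset.mem_filter] at hα hβE
    exact inner_right_of_mem_orthogonal hα.2 ((hE β hβ).resolve_left fun hβ' => hβE ⟨hβ, hβ'⟩)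
  rcases hirr _ (Finset.filter_subset _ _) hsplit with h | h
  · left
    rw [← orthogonal_eq_top_iff, eq_top_iff, ← hspan, span_le]
    intro γ hγ
    refine (hE γ hγ).resolve_left fun hγE => ?_
    simpa [h] using Finset.mem_filter.mpr ⟨hγ, hγE⟩
  · right
    rw [eq_top_iff, ← hspan, span_le]
    intro γ hγ
    rw [← h] at hγ
    exact (Finset.mem_filter.mp hγ).2

lemma IsOrthIndecomposable.exists_normalizedFrameOp_eq_smul [FiniteDimensional ℝ V] {Φ : Finset V}
    (hirr : IsOrthIndecomposable Φ) (hspan : span ℝ (Φ : Set V) = ⊤)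
    (hrefl : ∀ α ∈ Φ, ∀ β ∈ Φ, reflection (ℝ ∙ α)ᗮ β ∈ Φ) :
    ∃ μ : ℝ, ∀ x, normalizedFrameOp Φ x = μ • x := by
  cases subsingleton_or_nontrivial V
  · exact ⟨0, fun x => Subsingleton.elim _ _⟩
  set T := normalizedFrameOp Φ
  obtain ⟨μ, hμ⟩ : ∃ μ : ℝ, End.HasEigenvalue T μ :=
    ⟨_, (isSymmetric_normalizedFrameOp Φ).hasEigenvalue_iSup_of_finiteDimensional⟩
  have hinv : ∀ α ∈ Φ, ∀ x ∈ End.eigenspace T μ, reflection (ℝ ∙ α)ᗮ x ∈ End.eigenspace T μ := by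
    intro α hα x hx
    rw [End.mem_eigenspace_iff] at hx ⊢
    rw [normalizedFrameOp_apply_linearIsometryEquiv Φ _ (hrefl α hα), hx, map_smul]
  have htop := (hirr.eq_bot_or_eq_top hspan fun α hα =>
    mem_or_mem_orthogonal_of_reflection_mapsTo (hinv α hα)).resolve_left hμ
  exact ⟨μ, fun x => End.mem_eigenspace_iff.mp (htop ▸ mem_top)⟩

lemma sum_inner_normalizedFrameOp_orthonormalBasis {ι : Type*} [Fintype ι] (Φ : Finset V)
    (W : Submodule ℝ V) [W.HasOrthogonalProjection] (b : OrthonormalBasis ι ℝ W) :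
    ∑ i, ⟪(b i : V), normalizedFrameOp Φ (b i)⟫ =
      ∑ γ ∈ Φ, ‖W.starProjection γ‖ ^ 2 / ‖γ‖ ^ 2 := by
  simp only [normalizedFrameOp_apply, inner_sum, real_inner_smul_right]
  rw [Finset.sum_comm]
  refine Finset.sum_congr rfl fun γ _ => ?_
  have hproj : ∀ i, ⟪γ, (b i : V)⟫ = ⟪W.orthogonalProjectionOnto γ, b i⟫ := fun i =>
    (inner_orthogonalProjectionOnto_eq_of_mem_right _ _).symm
  calc ∑ i, ⟪γ, (b i : V)⟫ / ‖γ‖ ^ 2 * ⟪(b i : V), γ⟫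
      = (∑ i, ⟪W.orthogonalProjectionOnto γ, b i⟫ ^ 2) / ‖γ‖ ^ 2 := by
        rw [Finset.sum_div]
        refine Finset.sum_congr rfl fun i _ => ?_
        rw [real_inner_comm γ, hproj]
        ring
    _ = ‖W.starProjection γ‖ ^ 2 / ‖γ‖ ^ 2 := by
        rw [b.sum_sq_inner_left, starProjection_apply, norm_coe]

lemma mul_finrank_eq_sum_of_normalizedFrameOp_eq_smul [FiniteDimensional ℝ V] {Φ : Finset V} {μ : ℝ}
    (hμ : ∀ x, normalizedFrameOp Φ x = μ • x) (W : Submodule ℝ V) :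
    μ * finrank ℝ W = ∑ γ ∈ Φ, ‖W.starProjection γ‖ ^ 2 / ‖γ‖ ^ 2 := by
  let b := stdOrthonormalBasis ℝ W
  rw [← sum_inner_normalizedFrameOp_orthonormalBasis Φ W b]
  simp only [hμ, real_inner_smul_right, real_inner_self_eq_norm_sq, norm_coe, b.norm_eq_one,
    one_pow, mul_one, Finset.sum_const, Finset.card_univ, Fintype.card_fin, nsmul_eq_mul, mul_comm]

lemma mul_finrank_eq_card_of_normalizedFrameOp_eq_smul [FiniteDimensional ℝ V] {Φ : Finset V}
    (h0 : (0 : V) ∉ Φ) {μ : ℝ} (hμ : ∀ x, normalizedFrameOp Φ x = μ • x) :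
    μ * finrank ℝ V = Φ.card := by
  rw [← finrank_top ℝ V, mul_finrank_eq_sum_of_normalizedFrameOp_eq_smul hμ, starProjection_top,
    Finset.card_eq_sum_ones, Nat.cast_sum]
  refine Finset.sum_congr rfl fun γ hγ => ?_
  have : γ ≠ 0 := fun h => h0 (h ▸ hγ)
  simp [this]

lemma card_lt_mul_finrank_of_normalizedFrameOp_eq_smul [FiniteDimensional ℝ V] {Φ Ψ : Finset V}
    (h0 : (0 : V) ∉ Φ) {μ : ℝ} (hμ : ∀ x, normalizedFrameOp Φ x = μ • x) (hΨΦ : Ψ ⊆ Φ)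
    {W : Submodule ℝ V} (hΨW : ∀ γ ∈ Ψ, γ ∈ W) {γ₀ : V} (hγ₀Φ : γ₀ ∈ Φ) (hγ₀Ψ : γ₀ ∉ Ψ)
    (hγ₀W : γ₀ ∉ Wᗮ) :
    Ψ.card < μ * finrank ℝ W := by
  have hP : W.starProjection γ₀ ≠ 0 := by
    rwa [starProjection_apply, ne_eq, ZeroMemClass.coe_eq_zero,
      orthogonalProjectionOnto_eq_zero_iff]
  have hγ₀ : γ₀ ≠ 0 := fun h => hγ₀W (h ▸ zero_mem _)
  rw [mul_finrank_eq_sum_of_normalizedFrameOp_eq_smul hμ]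
  calc (Ψ.card : ℝ) = ∑ γ ∈ Ψ, ‖W.starProjection γ‖ ^ 2 / ‖γ‖ ^ 2 := by
        rw [Finset.card_eq_sum_ones, Nat.cast_sum]
        refine Finset.sum_congr rfl fun γ hγ => ?_
        have : γ ≠ 0 := fun h => h0 (h ▸ hΨΦ hγ)
        simp [starProjection_eq_self_iff.mpr (hΨW γ hγ), this]
    _ < ∑ γ ∈ Φ, ‖W.starProjection γ‖ ^ 2 / ‖γ‖ ^ 2 :=
        Finset.sum_lt_sum_of_subset hΨΦ hγ₀Φ hγ₀Ψ
          (div_pos (pow_pos (norm_pos_iff.mpr hP) 2) (pow_pos (norm_pos_iff.mpr hγ₀) 2))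
          fun _ _ _ => by positivity

lemma IsOrthIndecomposable.exists_notMem_orthogonal {Φ Ψ : Finset V}
    (hirr : IsOrthIndecomposable Φ) (hΨΦ : Ψ ⊆ Φ) (hΨ : Ψ.Nonempty) (hΨΦ' : Ψ ≠ Φ)
    {W : Submodule ℝ V} (hΨW : ∀ γ ∈ Ψ, γ ∈ W) : ∃ γ ∈ Φ, γ ∉ Ψ ∧ γ ∉ Wᗮ := by
  by_contra! h
  rcases hirr Ψ hΨΦ fun α hα β hβ hβΨ => inner_right_of_mem_orthogonal (hΨW α hα) (h β hβ hβΨ)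
    with hempty | hall
  · exact hΨ.ne_empty hempty
  · exact hΨΦ' hall

end

theorem stmt18_general {V : Type*} [NormedAddCommGroup V] [InnerProductSpace ℝ V]
    [FiniteDimensional ℝ V]
    (Φ : Finset V) (h0 : (0 : V) ∉ Φ)
    (hrefl : ∀ α ∈ Φ, ∀ β ∈ Φ, β - (2 * ⟪β, α⟫ / ⟪α, α⟫) • α ∈ Φ)
    (hspan : Submodule.span ℝ (Φ : Set V) = ⊤)
    (hirr : ∀ S ⊆ Φ, (∀ α ∈ S, ∀ β ∈ Φ, β ∉ S → ⟪α, β⟫ = 0) → S = ∅ ∨ S = Φ)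
    -- `Δ` is a base of `Φ`
    (Δ : Finset V) (hΔΦ : Δ ⊆ Φ)
    (hΔind : LinearIndependent ℝ (fun β : {x // x ∈ Δ} => (β : V)))
    -- `S` is a proper nonempty subset of the base, giving the simple subroot system `Ψ`
    (S : Finset V) (hSΔ : S ⊆ Δ) (hSne : S.Nonempty) (hproper : S ≠ Δ)
    (Ψ : Finset V)
    (hΨ : Ψ = Φ.filter (fun α => α ∈ Submodule.span ℤ (S : Set V))) :
    (Δ.card : ℝ) / Φ.card < (S.card : ℝ) / Ψ.card := by
  have hirr : IsOrthIndecomposable Φ := hirr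
  obtain ⟨μ, hμ⟩ := hirr.exists_normalizedFrameOp_eq_smul hspan fun α hα β hβ => by
    simpa only [reflection_orthogonal_singleton_apply] using hrefl α hα β hβ
  have hSind : LinearIndepOn ℝ id (S : Set V) := LinearIndepOn.mono hΔind (by simpa)
  have hΨΦ : Ψ ⊆ Φ := hΨ ▸ Finset.filter_subset _ _
  have hSΨ : S ⊆ Ψ := fun s hs => hΨ ▸ Finset.mem_filter.mpr ⟨hΔΦ (hSΔ hs), subset_span hs⟩
  have hΨS : ∀ γ ∈ Ψ, γ ∈ span ℝ (S : Set V) := fun γ hγ =>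
    span_subset_span ℤ ℝ _ (Finset.mem_filter.mp (hΨ ▸ hγ)).2
  obtain ⟨δ, hδΔ, hδS⟩ := Finset.exists_of_ssubset (hSΔ.ssubset_of_ne hproper)
  have hΨΦ' : Ψ ≠ Φ := fun h => by
    have hind : LinearIndepOn ℝ id (insert δ (S : Set V)) :=
      LinearIndepOn.mono hΔind (Set.insert_subset hδΔ (by simpa))
    exact hind.notMem_span_of_insert hδS (by simpa using hΨS δ (h ▸ hΔΦ hδΔ))
  obtain ⟨γ₀, hγ₀Φ, hγ₀Ψ, hγ₀S⟩ :=
    hirr.exists_notMem_orthogonal hΨΦ (hSne.mono hSΨ) hΨΦ' hΨS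
  have hΦ := mul_finrank_eq_card_of_normalizedFrameOp_eq_smul h0 hμ
  have hΨlt := card_lt_mul_finrank_of_normalizedFrameOp_eq_smul h0 hμ hΨΦ hΨS hγ₀Φ hγ₀Ψ hγ₀S
  rw [finrank_span_finset_eq_card hSind] at hΨlt
  have hn : (Δ.card : ℝ) ≤ finrank ℝ V := by exact_mod_cast hΔind.finset_card_le_finrank
  have hΨpos : (0 : ℝ) < Ψ.card := by exact_mod_cast (hSne.mono hSΨ).card_pos
  have hnpos : (0 : ℝ) < Δ.card := by exact_mod_cast (hSne.mono hSΔ).card_pos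
  rw [div_lt_div_iff₀ (by exact_mod_cast (hSne.mono (hSΨ.trans hΨΦ)).card_pos) hΨpos, ← hΦ]
  calc (Δ.card : ℝ) * Ψ.card < Δ.card * (μ * S.card) := by gcongr
    _ ≤ finrank ℝ V * (μ * S.card) := by gcongr; linarith
    _ = S.card * (μ * finrank ℝ V) := by ring

/-- Lemma 3: for an irreducible root system `Φ` with base `Δ` of cardinality `n`, and a
proper simple subroot system `Ψ = span_ℤ(S) ∩ Φ` for `S ⊊ Δ` with `m = |S|` simple roots,
one has `n/|Φ| < m/|Ψ|`. -/
theorem stmt18 {V : Type*} [NormedAddCommGroup V] [InnerProductSpace ℝ V]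
    [FiniteDimensional ℝ V]
    (Φ : Finset V) (h0 : (0 : V) ∉ Φ)
    (hneg : ∀ α ∈ Φ, -α ∈ Φ)
    (hrefl : ∀ α ∈ Φ, ∀ β ∈ Φ, β - (2 * ⟪β, α⟫ / ⟪α, α⟫) • α ∈ Φ)
    (hcrys : ∀ α ∈ Φ, ∀ β ∈ Φ, ∃ z : ℤ, 2 * ⟪β, α⟫ / ⟪α, α⟫ = (z : ℝ))
    (hspan : Submodule.span ℝ (Φ : Set V) = ⊤)
    (hirr : ∀ S ⊆ Φ, (∀ α ∈ S, ∀ β ∈ Φ, β ∉ S → ⟪α, β⟫ = 0) → S = ∅ ∨ S = Φ)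
    -- `Δ` is a base of `Φ`
    (Δ : Finset V) (hΔΦ : Δ ⊆ Φ)
    (hΔind : LinearIndependent ℝ (fun β : {x // x ∈ Δ} => (β : V)))
    (hbase : ∀ α ∈ Φ,
      (∃ a : V → ℤ, (∀ β ∈ Δ, 0 ≤ a β) ∧ α = ∑ β ∈ Δ, (a β : ℝ) • β) ∨
      (∃ a : V → ℤ, (∀ β ∈ Δ, a β ≤ 0) ∧ α = ∑ β ∈ Δ, (a β : ℝ) • β))
    -- `S` is a proper nonempty subset of the base, giving the simple subroot system `Ψ`
    (S : Finset V) (hSΔ : S ⊆ Δ) (hSne : S.Nonempty) (hproper : S ≠ Δ)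
    (Ψ : Finset V)
    (hΨ : Ψ = Φ.filter (fun α => α ∈ Submodule.span ℤ (S : Set V))) :
    (Δ.card : ℝ) / Φ.card < (S.card : ℝ) / Ψ.card :=
  stmt18_general Φ h0 hrefl hspan hirr Δ hΔΦ hΔind S hSΔ hSne hproper Ψ hΨ
end
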